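/- arXiv:2007.07991 — 2 statements merged into one kernel-verified Lean document; each statement's English description precedes it below -/
import Mathlib

section
/- For every real r with 0 < r ≤ 1, there exists a subset F of ℝ with Hausdorff dimension r, Lebesgue measure 0, and topological (small inductive) dimension 0; in particular F is a fractal in Mandelbrot's sense when r > 0. -/
open scoped ENNReal
open MeasureTheory Set

universe u

/-- `IndLE n X t` means the small inductive dimension of `X` is `≤ n - 1`. -/
def IndLE : ℕ → (X : Type u) → TopologicalSpace X → Prop
  | 0, X, _ => IsEmpty X
  | n + 1, X, t => by
      letI := t
      exact ∃ B : Set (Set X), TopologicalSpace.IsTopologicalBasis B ∧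
        ∀ U ∈ B, IndLE n (frontier U) inferInstance

/-- Small inductive (topological) dimension, as an extended nonnegative real:
the least `k : ℕ` such that `ind X ≤ k` (`⊤` if there is no finite bound). -/
noncomputable def indDim (X : Type u) [t : TopologicalSpace X] : ℝ≥0∞ :=
  sInf ((fun k : ℕ => (k : ℝ≥0∞)) '' {k : ℕ | IndLE (k + 1) X t})

/-!
For `0 < β < 1/2` let `C_β` be the set of sums `∑ aᵢ (1 - β) βⁱ` over binary digit sequences `a`.
Two points of `C_β` whose digit sequences first differ at place `n` are at distance between
`βⁿ (1 - 2β)` and `βⁿ`; take `s` with `βˢ = 1/2`. The `2ⁿ` cylinders of depth `n` cover `C_β`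
by sets of diameter `βⁿ`, so `μH[s] C_β ≤ 1`. Conversely, reading the digits of a point of `C_β`
in base `2` is an `s`-Hölder map of `C_β` onto `[0, 1]`, so `1 ≤ dimH C_β / s`.
Hence `dimH C_β = s`, and `C_β` is Lebesgue null since `s < 1`; dimension `1` is reached by a
countable union of such sets. A null subset of `ℝ` has dense complement, so the intervals with
endpoints outside it cut out a basis of clopen sets, and its small inductive dimension is `0`.
-/

open scoped NNReal
open Filter Topology Function

noncomputable def cantorMap (β : ℝ) (a : ℕ → Fin 2) : ℝ := ∑' i, (1 - β) * β ^ i * a i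

section cantorMap

variable {β : ℝ} (a b : ℕ → Fin 2)

lemma cantorMap_term_nonneg (hβ0 : 0 ≤ β) (hβ1 : β < 1) (i : ℕ) :
    0 ≤ (1 - β) * β ^ i * a i := by
  have := sub_nonneg.2 hβ1.le
  positivity

lemma cantorMap_term_le (hβ0 : 0 ≤ β) (hβ1 : β < 1) (i : ℕ) :
    (1 - β) * β ^ i * a i ≤ (1 - β) * β ^ i := by
  have := sub_nonneg.2 hβ1.le
  refine mul_le_of_le_one_right (by positivity) ?_
  exact_mod_cast Nat.le_of_lt_succ (a i).isLt

lemma summable_cantorMap (hβ0 : 0 ≤ β) (hβ1 : β < 1) :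
    Summable fun i => (1 - β) * β ^ i * a i :=
  .of_nonneg_of_le (cantorMap_term_nonneg a hβ0 hβ1) (cantorMap_term_le a hβ0 hβ1)
    ((summable_geometric_of_lt_one hβ0 hβ1).mul_left (1 - β))

lemma cantorMap_nonneg (hβ0 : 0 ≤ β) (hβ1 : β < 1) : 0 ≤ cantorMap β a :=
  tsum_nonneg (cantorMap_term_nonneg a hβ0 hβ1)

lemma cantorMap_le_one (hβ0 : 0 ≤ β) (hβ1 : β < 1) : cantorMap β a ≤ 1 := calc
  cantorMap β a ≤ ∑' i, (1 - β) * β ^ i :=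
      (summable_cantorMap a hβ0 hβ1).tsum_le_tsum (cantorMap_term_le a hβ0 hβ1)
        ((summable_geometric_of_lt_one hβ0 hβ1).mul_left (1 - β))
  _ = 1 := by
      rw [tsum_mul_left, tsum_geometric_of_lt_one hβ0 hβ1, mul_inv_cancel₀ (sub_ne_zero.2 hβ1.ne')]

lemma cantorMap_eq_sum_add_cantorMap (hβ0 : 0 ≤ β) (hβ1 : β < 1) (n : ℕ) :
    cantorMap β a = ∑ i ∈ Finset.range n, (1 - β) * β ^ i * a i +
      β ^ n * cantorMap β (fun i => a (i + n)) := by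
  rw [cantorMap, ← (summable_cantorMap a hβ0 hβ1).sum_add_tsum_nat_add n, cantorMap,
    ← tsum_mul_left]
  congr 2 with i
  ring

lemma abs_cantorMap_sub_le (hβ0 : 0 ≤ β) (hβ1 : β < 1) {n : ℕ} (h : ∀ i < n, a i = b i) :
    |cantorMap β a - cantorMap β b| ≤ β ^ n := by
  rw [cantorMap_eq_sum_add_cantorMap a hβ0 hβ1 n, cantorMap_eq_sum_add_cantorMap b hβ0 hβ1 n,
    Finset.sum_congr rfl fun i hi => by rw [h i (Finset.mem_range.1 hi)], add_sub_add_left_eq_sub,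
    ← mul_sub, abs_mul, abs_of_nonneg (pow_nonneg hβ0 n)]
  refine mul_le_of_le_one_right (pow_nonneg hβ0 n) (abs_sub_le_iff.2 ⟨?_, ?_⟩) <;>
  linarith [cantorMap_nonneg (fun i => a (i + n)) hβ0 hβ1,
    cantorMap_le_one (fun i => a (i + n)) hβ0 hβ1,
    cantorMap_nonneg (fun i => b (i + n)) hβ0 hβ1, cantorMap_le_one (fun i => b (i + n)) hβ0 hβ1]

lemma le_cantorMap_sub (hβ0 : 0 ≤ β) (hβ1 : β < 1) {n : ℕ} (h : ∀ i < n, a i = b i)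
    (ha : a n = 1) (hb : b n = 0) : β ^ n * (1 - 2 * β) ≤ cantorMap β a - cantorMap β b := by
  rw [cantorMap_eq_sum_add_cantorMap a hβ0 hβ1 (n + 1),
    cantorMap_eq_sum_add_cantorMap b hβ0 hβ1 (n + 1), Finset.sum_range_succ,
    Finset.sum_range_succ, ha, hb,
    Finset.sum_congr rfl fun i hi => by rw [h i (Finset.mem_range.1 hi)]]
  have hβn : 0 ≤ β ^ (n + 1) := pow_nonneg hβ0 (n + 1)
  have := mul_nonneg hβn (cantorMap_nonneg (fun i => a (i + (n + 1))) hβ0 hβ1)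
  have := mul_le_of_le_one_right hβn (cantorMap_le_one (fun i => b (i + (n + 1))) hβ0 hβ1)
  simp only [Fin.val_one, Fin.val_zero, Nat.cast_one, Nat.cast_zero, mul_one, mul_zero, add_zero]
  linarith [pow_succ β n]

lemma le_abs_cantorMap_sub (hβ0 : 0 ≤ β) (hβ1 : β < 1) (hab : a ≠ b) :
    β ^ PiNat.firstDiff a b * (1 - 2 * β) ≤ |cantorMap β a - cantorMap β b| := by
  have hlt : ∀ i < PiNat.firstDiff a b, a i = b i := fun _ hi => PiNat.apply_eq_of_lt_firstDiff hi
  have hne := PiNat.apply_firstDiff_ne hab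
  have fin_two_cases : ∀ x y : Fin 2, x ≠ y → x = 1 ∧ y = 0 ∨ y = 1 ∧ x = 0 := by decide
  rcases fin_two_cases _ _ hne with ⟨ha, hb⟩ | ⟨hb, ha⟩
  · exact (le_cantorMap_sub a b hβ0 hβ1 hlt ha hb).trans (le_abs_self _)
  · rw [abs_sub_comm]
    exact (le_cantorMap_sub b a hβ0 hβ1 (fun i hi => (hlt i hi).symm) hb ha).trans (le_abs_self _)

lemma cantorMap_injective (hβ0 : 0 < β) (hβ : β < 1 / 2) : Injective (cantorMap β) := by
  intro a b h
  by_contra hab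
  have := le_abs_cantorMap_sub a b hβ0.le (by linarith) hab
  rw [h, sub_self, abs_zero] at this
  have : 0 < β ^ PiNat.firstDiff a b * (1 - 2 * β) := mul_pos (pow_pos hβ0 _) (by linarith)
  linarith

lemma hausdorffMeasure_range_cantorMap_le_one (hβ0 : 0 ≤ β) (hβ1 : β < 1) {s : ℝ≥0}
    (hs : β ^ (s : ℝ) = 1 / 2) : μH[s] (range (cantorMap β)) ≤ 1 := by
  set cyl : ∀ n, (Fin n → Fin 2) → Set ℝ :=
    fun n w => cantorMap β '' {a | ∀ i : Fin n, a i = w i}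
  have hcover : ∀ n, range (cantorMap β) ⊆ ⋃ w, cyl n w := by
    rintro n _ ⟨a, rfl⟩
    exact mem_iUnion.2 ⟨fun i => a i, a, fun i => rfl, rfl⟩
  have hdiam : ∀ n w, Metric.ediam (cyl n w) ≤ ENNReal.ofReal (β ^ n) := by
    refine fun n w => Metric.ediam_image_le_iff.2 fun a ha b hb => ?_
    rw [edist_dist, Real.dist_eq]
    exact ENNReal.ofReal_le_ofReal
      (abs_cantorMap_sub_le a b hβ0 hβ1 fun i hi => (ha ⟨i, hi⟩).trans (hb ⟨i, hi⟩).symm)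
  have hr : Tendsto (fun n : ℕ => ENNReal.ofReal (β ^ n)) atTop (𝓝 0) := by
    simpa using ENNReal.tendsto_ofReal (tendsto_pow_atTop_nhds_zero_of_lt_one hβ0 hβ1)
  have hsum : ∀ n, ∑ w : Fin n → Fin 2, ENNReal.ofReal (β ^ n) ^ (s : ℝ) = 1 := by
    intro n
    rw [Finset.sum_const, Finset.card_univ, Fintype.card_fun, Fintype.card_fin, Fintype.card_fin,
      nsmul_eq_mul, ENNReal.ofReal_rpow_of_nonneg (pow_nonneg hβ0 n) s.coe_nonneg,
      ← Real.rpow_pow_comm hβ0, hs, ← ENNReal.ofReal_natCast, ← ENNReal.ofReal_mul (by positivity)]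
    simp
  calc μH[s] (range (cantorMap β))
      ≤ liminf (fun n => ∑ w, Metric.ediam (cyl n w) ^ (s : ℝ)) atTop :=
        Measure.hausdorffMeasure_le_liminf_sum _ _ _ hr cyl (Eventually.of_forall hdiam)
          (Eventually.of_forall hcover)
    _ ≤ liminf (fun n => ∑ w : Fin n → Fin 2, ENNReal.ofReal (β ^ n) ^ (s : ℝ)) atTop :=
        liminf_le_liminf (Eventually.of_forall fun n =>
          Finset.sum_le_sum fun w _ => ENNReal.rpow_le_rpow (hdiam n w) s.2)
    _ = 1 := by simp only [hsum, liminf_const]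

lemma abs_ofDigits_sub_le_mul_abs_cantorMap_sub_rpow (hβ0 : 0 < β) (hβ : β < 1 / 2) {s : ℝ≥0}
    (hs : β ^ (s : ℝ) = 1 / 2) :
    |Real.ofDigits a - Real.ofDigits b| ≤
      (1 - 2 * β) ^ (-(s : ℝ)) * |cantorMap β a - cantorMap β b| ^ (s : ℝ) := by
  have h2β : 0 < 1 - 2 * β := by linarith
  rcases eq_or_ne a b with rfl | hab
  · simp only [sub_self, abs_zero]; positivity
  set n := PiNat.firstDiff a b
  calc |Real.ofDigits a - Real.ofDigits b|
      ≤ ((2 : ℝ) ^ n)⁻¹ := by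
        exact_mod_cast Real.abs_ofDigits_sub_ofDigits_le (x := a) (y := b) (n := n)
          fun i hi => PiNat.apply_eq_of_lt_firstDiff hi
    _ = (β ^ n) ^ (s : ℝ) := by rw [← Real.rpow_pow_comm hβ0.le, hs, one_div, inv_pow]
    _ ≤ (|cantorMap β a - cantorMap β b| / (1 - 2 * β)) ^ (s : ℝ) :=
        Real.rpow_le_rpow (pow_nonneg hβ0.le n)
          ((le_div_iff₀ h2β).2 (le_abs_cantorMap_sub a b hβ0.le (by linarith) hab)) s.2
    _ = _ := by rw [Real.div_rpow (abs_nonneg _) h2β.le, Real.rpow_neg h2β.le]; ring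

lemma holderOnWith_ofDigits_comp_invFun (hβ0 : 0 < β) (hβ : β < 1 / 2) {s : ℝ≥0}
    (hs : β ^ (s : ℝ) = 1 / 2) :
    HolderOnWith ((1 - 2 * β) ^ (-(s : ℝ))).toNNReal s
      (Real.ofDigits ∘ invFun (cantorMap β)) (range (cantorMap β)) := by
  rintro _ ⟨a, rfl⟩ _ ⟨b, rfl⟩
  have hinj := cantorMap_injective hβ0 hβ
  simp only [comp_apply, leftInverse_invFun hinj a, leftInverse_invFun hinj b, edist_dist,
    Real.dist_eq]
  rw [ENNReal.ofReal_rpow_of_nonneg (abs_nonneg _) s.coe_nonneg]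
  exact (ENNReal.ofReal_le_ofReal (abs_ofDigits_sub_le_mul_abs_cantorMap_sub_rpow a b
    hβ0 hβ hs)).trans_eq
    (ENNReal.ofReal_mul (Real.rpow_nonneg (by linarith) _))

theorem dimH_range_cantorMap (hβ0 : 0 < β) (hβ : β < 1 / 2) {s : ℝ≥0}
    (hs : β ^ (s : ℝ) = 1 / 2) : dimH (range (cantorMap β)) = s := by
  refine le_antisymm (dimH_le_of_hausdorffMeasure_ne_top ?_) ?_
  · exact ne_top_of_le_ne_top ENNReal.one_ne_top
      (hausdorffMeasure_range_cantorMap_le_one hβ0.le (by linarith) hs)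
  have hs0 : 0 < s := pos_iff_ne_zero.2 fun h => by norm_num [h] at hs
  have hIcc : Icc 0 1 ⊆ (Real.ofDigits ∘ invFun (cantorMap β)) '' range (cantorMap β) := by
    intro y hy
    obtain ⟨a, -, rfl⟩ := Real.ofDigits_SurjOn (b := 2) one_lt_two hy
    exact ⟨cantorMap β a, mem_range_self a,
      congrArg Real.ofDigits (leftInverse_invFun (cantorMap_injective hβ0 hβ) a)⟩
  have h1 : (1 : ℝ≥0∞) ≤ dimH (range (cantorMap β)) / s := calc
    1 = dimH (Icc (0 : ℝ) 1) := by simp [Real.dimH_of_nonempty_interior]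
    _ ≤ _ := dimH_mono hIcc
    _ ≤ _ := (holderOnWith_ofDigits_comp_invFun hβ0 hβ hs).dimH_image_le hs0
  rwa [ENNReal.le_div_iff_mul_le (Or.inl (by exact_mod_cast hs0.ne')) (Or.inl ENNReal.coe_ne_top),
    one_mul] at h1

end cantorMap

lemma exists_dimH_eq_of_lt_one {s : ℝ≥0} (hs0 : 0 < s) (hs1 : s < 1) :
    ∃ C : Set ℝ, dimH C = s := by
  refine ⟨range (cantorMap ((1 / 2) ^ (s : ℝ)⁻¹)), dimH_range_cantorMap (by positivity) ?_ ?_⟩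
  · exact Real.rpow_lt_self_of_lt_one (by norm_num) (by norm_num) (one_lt_inv₀ hs0 |>.2 hs1)
  · rw [← Real.rpow_mul (by norm_num), inv_mul_cancel₀ (by exact_mod_cast hs0.ne'), Real.rpow_one]

lemma volume_eq_zero_of_dimH_lt_one {F : Set ℝ} (h : dimH F < 1) : volume F = 0 := by
  rw [← hausdorffMeasure_real]
  exact hausdorffMeasure_of_dimH_lt (d := 1) (by exact_mod_cast h)

lemma exists_dimH_eq_one_and_volume_eq_zero : ∃ F : Set ℝ, dimH F = 1 ∧ volume F = 0 := by
  set s : ℕ → ℝ≥0 := fun n => (n + 1 : ℕ) / ((n + 1 : ℕ) + 1)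
  have hs1 : ∀ n, s n < 1 := fun n => (div_lt_one (by positivity)).2 (lt_add_one _)
  choose C hC using fun n => exists_dimH_eq_of_lt_one (s := s n) (by positivity) (hs1 n)
  have hlim : Tendsto (fun n => (s n : ℝ≥0∞)) atTop (𝓝 1) :=
    ENNReal.tendsto_coe.2 ((tendsto_natCast_div_add_atTop 1).comp (tendsto_add_atTop_nat 1))
  refine ⟨⋃ n, C n, ?_, measure_iUnion_null fun n =>
    volume_eq_zero_of_dimH_lt_one ((hC n).trans_lt (by exact_mod_cast hs1 n))⟩
  rw [dimH_iUnion]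
  refine le_antisymm (iSup_le fun n => (hC n).trans_le (by exact_mod_cast (hs1 n).le)) ?_
  exact le_of_tendsto' hlim fun n => (hC n).symm.trans_le (le_iSup (fun n => dimH (C n)) n)

lemma exists_dimH_eq_ofReal_and_volume_eq_zero {r : ℝ} (hr : r ∈ Ioc 0 1) :
    ∃ F : Set ℝ, dimH F = ENNReal.ofReal r ∧ volume F = 0 := by
  rcases hr.2.lt_or_eq with hr1 | rfl
  · obtain ⟨F, hF⟩ := exists_dimH_eq_of_lt_one (s := r.toNNReal) (by simpa using hr.1)
      (by simpa using hr1)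
    exact ⟨F, hF, volume_eq_zero_of_dimH_lt_one (hF.trans_lt (ENNReal.ofReal_lt_one.2 hr1))⟩
  · simpa using exists_dimH_eq_one_and_volume_eq_zero

lemma isTopologicalBasis_isClopen_of_dense_compl {α : Type*} [LinearOrder α] [TopologicalSpace α]
    [OrderTopology α] [DenselyOrdered α] [NoMinOrder α] [NoMaxOrder α] {F : Set α}
    (hF : Dense Fᶜ) : TopologicalSpace.IsTopologicalBasis {U : Set F | IsClopen U} := by
  refine TopologicalSpace.isTopologicalBasis_of_isOpen_of_nhds (fun U hU => hU.isOpen) ?_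
  rintro x _ hx ⟨V, hV, rfl⟩
  obtain ⟨l, u, ⟨hl, hu⟩, hlu⟩ := mem_nhds_iff_exists_Ioo_subset.1 (hV.mem_nhds hx)
  obtain ⟨a, haF, hla, hax⟩ := hF.exists_between hl
  obtain ⟨b, hbF, hxb, hbu⟩ := hF.exists_between hu
  have hIoo : ((↑) : F → α) ⁻¹' Ioo a b = (↑) ⁻¹' Icc a b := by
    ext y
    simp only [mem_preimage, mem_Ioo, mem_Icc]
    have hya : (y : α) ≠ a := fun h => haF (h ▸ y.2)
    have hyb : (y : α) ≠ b := fun h => hbF (h ▸ y.2)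
    constructor
    · exact fun h => ⟨h.1.le, h.2.le⟩
    · exact fun h => ⟨lt_of_le_of_ne h.1 hya.symm, lt_of_le_of_ne h.2 hyb⟩
  refine ⟨(↑) ⁻¹' Ioo a b, ⟨?_, isOpen_Ioo.preimage continuous_subtype_val⟩, ⟨hax, hxb⟩, ?_⟩
  · rw [hIoo]; exact isClosed_Icc.preimage continuous_subtype_val
  · exact fun y hy => hlu ⟨hla.trans hy.1, hy.2.trans hbu⟩

lemma indDim_eq_zero_of_isTopologicalBasis_isClopen {X : Type u} [TopologicalSpace X]
    (h : TopologicalSpace.IsTopologicalBasis {U : Set X | IsClopen U}) : indDim X = 0 := by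
  refine nonpos_iff_eq_zero.1 (sInf_le ⟨0, ⟨_, h, fun U hU => ?_⟩, Nat.cast_zero⟩)
  show IsEmpty (frontier U)
  rw [(show IsClopen U from hU).frontier_eq]
  exact isEmpty_coe_sort.2 rfl

/-- For every `0 < r ≤ 1` there is `F ⊆ ℝ` with Hausdorff dimension `r`,
Lebesgue measure `0`, and small inductive (topological) dimension `0`; in particular `F`
is a fractal in Mandelbrot's sense. -/
theorem exists_thin_fractal (r : ℝ) (hr : r ∈ Set.Ioc (0 : ℝ) 1) :
    ∃ F : Set ℝ, dimH F = ENNReal.ofReal r ∧ volume F = 0 ∧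
      indDim ↥F = 0 ∧ indDim ↥F < dimH F := by
  obtain ⟨F, hdim, hvol⟩ := exists_dimH_eq_ofReal_and_volume_eq_zero hr
  have hind : indDim F = 0 := indDim_eq_zero_of_isTopologicalBasis_isClopen
    (isTopologicalBasis_isClopen_of_dense_compl
      (interior_eq_empty_iff_dense_compl.1 (Measure.interior_eq_empty_of_null hvol)))
  exact ⟨F, hdim, hvol, hind, by rw [hind, hdim]; exact ENNReal.ofReal_pos.2 hr.1⟩
end

section
/- For any countable family {A_i} of subsets of ℝⁿ each with small inductive dimension ≤ 0 that are closed in their union (or more specifically, for a countable union of Cantor-type compact sets in ℝ), the union has small inductive dimension ≤ 0. -/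
open scoped ENNReal
open MeasureTheory Set

universe u

/-- Small inductive dimension ≤ 0. -/
def IndDimLEZero (X : Type u) [t : TopologicalSpace X] : Prop := IndLE 1 X t

/-!
In a Lindelöf space with a clopen basis, disjoint closed sets are separated by a clopen set:
disjointify a countable cover by clopen sets each missing one of them. Given disjoint closed `A`,
`B` in `X = ⋃ Fₖ`, enlarge them to disjoint closed sets `Pₖ ⊇ A`, `Qₖ ⊇ B`, each contained in the
interior of the next, with `Fₖ ⊆ Pₖ₊₁ ∪ Qₖ₊₁`: separate the traces of `Pₖ`, `Qₖ` on `Fₖ` by a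
clopen subset of `Fₖ` and enlarge using normality of `X`. Then `⋃ Pₖ` and `⋃ Qₖ` are complementary
open sets, so `⋃ Pₖ` is clopen; separating points from closed sets gives a clopen basis.
-/

open Function TopologicalSpace Topology Filter

def HasClopenBasis (X : Type*) [TopologicalSpace X] : Prop :=
  ∃ B : Set (Set X), IsTopologicalBasis B ∧ ∀ U ∈ B, IsClopen U

/-- For normal spaces this is strong zero-dimensionality, `Ind X ≤ 0`. -/
def HasClopenSeparation (X : Type*) [TopologicalSpace X] : Prop :=
  ∀ ⦃A B : Set X⦄, IsClosed A → IsClosed B → Disjoint A B →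
    ∃ C, IsClopen C ∧ A ⊆ C ∧ Disjoint C B

theorem indDimLEZero_iff_hasClopenBasis (X : Type u) [TopologicalSpace X] :
    IndDimLEZero X ↔ HasClopenBasis X := by
  refine exists_congr fun B => and_congr_right fun _ => forall₂_congr fun U _ => ?_
  change IsEmpty (frontier U) ↔ _
  rw [isEmpty_coe_sort, isClopen_iff_frontier_eq_empty]

section
variable {X : Type*} [TopologicalSpace X]

theorem Topology.IsInducing.hasClopenBasis {Y : Type*} [TopologicalSpace Y] {f : X → Y}
    (hf : IsInducing f) (h : HasClopenBasis Y) : HasClopenBasis X := by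
  obtain ⟨B, hB, hclopen⟩ := h
  refine ⟨(f ⁻¹' ·) '' B, hB.isInducing hf, ?_⟩
  rintro _ ⟨U, hU, rfl⟩
  exact (hclopen U hU).preimage hf.continuous

theorem HasClopenSeparation.hasClopenBasis [T1Space X] (h : HasClopenSeparation X) :
    HasClopenBasis X := by
  refine ⟨{U | IsClopen U}, isTopologicalBasis_of_isOpen_of_nhds (fun U hU => hU.isOpen) ?_,
    fun U hU => hU⟩
  intro x W hxW hW
  obtain ⟨C, hC, hxC, hCW⟩ := h isClosed_singleton hW.isClosed_compl
    (disjoint_singleton_left.2 (not_not_intro hxW))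
  exact ⟨C, hC, hxC rfl, disjoint_compl_right_iff_subset.1 hCW⟩

theorem isClopen_biUnion_of_pairwise_disjoint {ι : Type*} {D : ι → Set X}
    (hD : ∀ i, IsOpen (D i)) (hdisj : Pairwise (Disjoint on D)) (hcover : ⋃ i, D i = univ)
    (s : Set ι) : IsClopen (⋃ i ∈ s, D i) := by
  refine isClopen_of_disjoint_cover_open (b := ⋃ i ∈ sᶜ, D i) ?_ (isOpen_biUnion fun i _ => hD i)
    (isOpen_biUnion fun i _ => hD i) ?_
  · rw [← biUnion_union, union_compl_self, biUnion_univ, hcover]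
  · exact disjoint_iUnion₂_left.2 fun i hi =>
      disjoint_iUnion₂_right.2 fun j hj => hdisj (ne_of_mem_of_not_mem hi hj)

theorem isOpen_disjointed_of_isClopen {W : ℕ → Set X} (hW : ∀ k, IsClopen (W k)) (k : ℕ) :
    IsOpen (disjointed W k) := by
  rw [disjointed_eq_inter_compl]
  exact (hW k).isOpen.inter <| (finite_lt_nat k).isOpen_biInter fun j _ => (hW j).compl.isOpen

theorem exists_isClopen_of_clopen_cover {W : ℕ → Set X} (hW : ∀ k, IsClopen (W k))
    (hcover : ⋃ k, W k = univ) {A B : Set X} (hWAB : ∀ k, Disjoint (W k) A ∨ Disjoint (W k) B) :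
    ∃ C, IsClopen C ∧ A ⊆ C ∧ Disjoint C B := by
  refine ⟨⋃ k ∈ {k | Disjoint (W k) B}, disjointed W k,
    isClopen_biUnion_of_pairwise_disjoint (isOpen_disjointed_of_isClopen hW)
      (disjoint_disjointed W) (iUnion_disjointed.trans hcover) _, ?_, ?_⟩
  · intro x hxA
    obtain ⟨k, hxk⟩ := mem_iUnion.1 (iUnion_disjointed.trans hcover ▸ mem_univ x)
    refine mem_biUnion ((hWAB k).resolve_left fun hkA => ?_) hxk
    exact disjoint_left.1 hkA (disjointed_subset W k hxk) hxA
  · exact disjoint_iUnion₂_left.2 fun k hk => hk.mono_left (disjointed_subset W k)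

theorem HasClopenBasis.hasClopenSeparation [LindelofSpace X] (h : HasClopenBasis X) :
    HasClopenSeparation X := by
  obtain ⟨𝓑, h𝓑, hclopen⟩ := h
  intro A B hA hB hAB
  have hnbhd : ∀ x, ∃ W, IsClopen W ∧ x ∈ W ∧ (Disjoint W A ∨ Disjoint W B) := by
    intro x
    by_cases hxA : x ∈ A
    · obtain ⟨W, hW, hxW, hWB⟩ :=
        h𝓑.exists_subset_of_mem_open (disjoint_left.1 hAB hxA) hB.isOpen_compl
      exact ⟨W, hclopen W hW, hxW, .inr (subset_compl_iff_disjoint_right.1 hWB)⟩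
    · obtain ⟨W, hW, hxW, hWA⟩ := h𝓑.exists_subset_of_mem_open hxA hA.isOpen_compl
      exact ⟨W, hclopen W hW, hxW, .inl (subset_compl_iff_disjoint_right.1 hWA)⟩
  choose W hWclopen hxW hWAB using hnbhd
  obtain ⟨t, htc, -, hcover⟩ := isLindelof_univ.elim_nhds_subcover W
    fun x _ => (hWclopen x).isOpen.mem_nhds (hxW x)
  rcases t.eq_empty_or_nonempty with rfl | ht
  · refine ⟨∅, isClopen_empty, fun x _ => ?_, empty_disjoint _⟩
    simpa using hcover (mem_univ x)
  obtain ⟨e, rfl⟩ := htc.exists_eq_range ht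
  refine exists_isClopen_of_clopen_cover (fun k => hWclopen (e k)) ?_ fun k => hWAB (e k)
  rw [biUnion_range] at hcover
  exact univ_subset_iff.1 hcover

theorem exists_isClosed_disjoint_subset_interior [NormalSpace X] {s t : Set X}
    (hs : IsClosed s) (ht : IsClosed t) (hst : Disjoint s t) :
    ∃ s' t', IsClosed s' ∧ IsClosed t' ∧ Disjoint s' t' ∧ s ⊆ interior s' ∧ t ⊆ interior t' := by
  obtain ⟨s', ⟨hs's, hs'⟩, t', ⟨ht't, ht'⟩, hdisj⟩ :=
    ((closed_nhdsSet_basis s hs).disjoint_iff (closed_nhdsSet_basis t ht)).1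
      (disjoint_nhdsSet_nhdsSet hs ht hst)
  exact ⟨s', t', hs', ht', hdisj, subset_interior_iff_mem_nhdsSet.2 hs's,
    subset_interior_iff_mem_nhdsSet.2 ht't⟩

theorem exists_isClosed_disjoint_subset_interior_covering [NormalSpace X] {F : Set X}
    (hF : IsClosed F) (hFsep : HasClopenSeparation F) {P Q : Set X} (hP : IsClosed P)
    (hQ : IsClosed Q) (hPQ : Disjoint P Q) :
    ∃ P' Q', IsClosed P' ∧ IsClosed Q' ∧ Disjoint P' Q' ∧ P ⊆ interior P' ∧ Q ⊆ interior Q' ∧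
      F ⊆ P' ∪ Q' := by
  obtain ⟨C, hC, hPC, hCQ⟩ := hFsep (hP.preimage continuous_subtype_val)
    (hQ.preimage continuous_subtype_val) (hPQ.preimage _)
  have hemb := hF.isClosedEmbedding_subtypeVal
  have hFC : F \ (↑) '' C = (↑) '' Cᶜ := by
    rw [image_compl_eq_range_sdiff_image Subtype.val_injective, Subtype.range_coe]
  have hdisj : Disjoint (P ∪ (↑) '' C) (Q ∪ (F \ (↑) '' C)) := by
    refine disjoint_union_left.2 ⟨disjoint_union_right.2 ⟨hPQ, ?_⟩,
      disjoint_union_right.2 ⟨?_, disjoint_sdiff_right⟩⟩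
    · exact disjoint_left.2 fun x hxP hxF => hxF.2 ⟨⟨x, hxF.1⟩, hPC hxP, rfl⟩
    · rw [disjoint_left]
      rintro _ ⟨y, hyC, rfl⟩ hyQ
      exact disjoint_left.1 hCQ hyC hyQ
  obtain ⟨P', Q', hP', hQ', hP'Q', hPP', hQQ'⟩ := exists_isClosed_disjoint_subset_interior
    (hP.union (hemb.isClosedMap _ hC.isClosed))
    (hQ.union (hFC ▸ hemb.isClosedMap _ hC.compl.isClosed)) hdisj
  refine ⟨P', Q', hP', hQ', hP'Q', subset_union_left.trans hPP', subset_union_left.trans hQQ',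
    fun x hxF => ?_⟩
  by_cases hxC : x ∈ (↑) '' C
  · exact .inl (interior_subset (hPP' (.inr hxC)))
  · exact .inr (interior_subset (hQQ' (.inr ⟨hxF, hxC⟩)))

theorem disjoint_iUnion_of_monotone {α ι : Type*} [Preorder ι] [IsDirected ι (· ≤ ·)]
    {P Q : ι → Set α} (hP : Monotone P) (hQ : Monotone Q) (hPQ : ∀ i, Disjoint (P i) (Q i)) :
    Disjoint (⋃ i, P i) (⋃ i, Q i) := by
  refine disjoint_iUnion_left.2 fun i => disjoint_iUnion_right.2 fun j => ?_
  obtain ⟨k, hik, hjk⟩ := directed_of (· ≤ ·) i j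
  exact (hPQ k).mono (hP hik) (hQ hjk)

theorem isOpen_iUnion_of_subset_interior {P : ℕ → Set X}
    (hP : ∀ k, P k ⊆ interior (P (k + 1))) : IsOpen (⋃ k, P k) := by
  refine isOpen_iff_mem_nhds.2 fun x hx => ?_
  obtain ⟨k, hk⟩ := mem_iUnion.1 hx
  exact mem_of_superset (mem_interior_iff_mem_nhds.1 (hP k hk)) (subset_iUnion P (k + 1))

theorem exists_seq_disjoint_subset_interior_covering [NormalSpace X] {F : ℕ → Set X}
    (hFc : ∀ k, IsClosed (F k)) (hF : ∀ k, HasClopenSeparation (F k)) {A B : Set X}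
    (hA : IsClosed A) (hB : IsClosed B) (hAB : Disjoint A B) :
    ∃ P Q : ℕ → Set X, P 0 = A ∧ Q 0 = B ∧ (∀ k, Disjoint (P k) (Q k)) ∧
      (∀ k, P k ⊆ interior (P (k + 1))) ∧ (∀ k, Q k ⊆ interior (Q (k + 1))) ∧
      ∀ k, F k ⊆ P (k + 1) ∪ Q (k + 1) := by
  have step : ∀ k (p : Set X × Set X), IsClosed p.1 → IsClosed p.2 → Disjoint p.1 p.2 →
      ∃ q : Set X × Set X, IsClosed q.1 ∧ IsClosed q.2 ∧ Disjoint q.1 q.2 ∧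
        p.1 ⊆ interior q.1 ∧ p.2 ⊆ interior q.2 ∧ F k ⊆ q.1 ∪ q.2 := fun k p hp₁ hp₂ hp =>
    let ⟨P', Q', h⟩ :=
      exists_isClosed_disjoint_subset_interior_covering (hFc k) (hF k) hp₁ hp₂ hp
    ⟨(P', Q'), h⟩
  choose! next hnext using step
  let seq : ℕ → Set X × Set X := fun k => Nat.rec (A, B) next k
  have hseq : ∀ k, IsClosed (seq k).1 ∧ IsClosed (seq k).2 ∧ Disjoint (seq k).1 (seq k).2 := by
    intro k
    induction k with
    | zero => exact ⟨hA, hB, hAB⟩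
    | succ k ih =>
      obtain ⟨h₁, h₂, h₃, -⟩ := hnext k _ ih.1 ih.2.1 ih.2.2
      exact ⟨h₁, h₂, h₃⟩
  have hstep := fun k => hnext k (seq k) (hseq k).1 (hseq k).2.1 (hseq k).2.2
  exact ⟨fun k => (seq k).1, fun k => (seq k).2, rfl, rfl, fun k => (hseq k).2.2,
    fun k => (hstep k).2.2.2.1, fun k => (hstep k).2.2.2.2.1, fun k => (hstep k).2.2.2.2.2⟩

theorem HasClopenSeparation.of_iUnion_eq_univ [NormalSpace X] {F : ℕ → Set X}
    (hFc : ∀ k, IsClosed (F k)) (hF : ∀ k, HasClopenSeparation (F k))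
    (hcover : ⋃ k, F k = univ) : HasClopenSeparation X := by
  intro A B hA hB hAB
  obtain ⟨P, Q, rfl, rfl, hPQ, hP, hQ, hFPQ⟩ :=
    exists_seq_disjoint_subset_interior_covering hFc hF hA hB hAB
  have hdisj : Disjoint (⋃ k, P k) (⋃ k, Q k) := disjoint_iUnion_of_monotone
    (monotone_nat_of_le_succ fun k => (hP k).trans interior_subset)
    (monotone_nat_of_le_succ fun k => (hQ k).trans interior_subset) hPQ
  have hunion : univ ⊆ (⋃ k, P k) ∪ ⋃ k, Q k := by
    rw [← hcover, iUnion_subset_iff]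
    exact fun k => (hFPQ k).trans (union_subset_union (subset_iUnion P _) (subset_iUnion Q _))
  exact ⟨⋃ k, P k, isClopen_of_disjoint_cover_open hunion (isOpen_iUnion_of_subset_interior hP)
    (isOpen_iUnion_of_subset_interior hQ) hdisj, subset_iUnion P 0,
    hdisj.mono_right (subset_iUnion Q 0)⟩

end

/-- A countable union of subsets of `ℝⁿ`, each of small inductive
dimension `≤ 0` and closed in the union, has small inductive dimension `≤ 0`. -/
theorem indDimLEZero_iUnion (n : ℕ) (A : ℕ → Set (EuclideanSpace ℝ (Fin n)))
    (h0 : ∀ i, IndDimLEZero ↥(A i))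
    (hcl : ∀ i, IsClosed (Subtype.val ⁻¹' (A i) : Set ↥(⋃ j, A j))) :
    IndDimLEZero ↥(⋃ i, A i) := by
  have hpiece (i : ℕ) : HasClopenSeparation (Subtype.val ⁻¹' (A i) : Set ↥(⋃ j, A j)) := by
    have hinduced : IsInducing (codRestrict (Subtype.val ∘ Subtype.val) (A i)
        fun x : (Subtype.val ⁻¹' (A i) : Set ↥(⋃ j, A j)) => x.2) :=
      (IsInducing.subtypeVal.comp IsInducing.subtypeVal).codRestrict _
    exact (hinduced.hasClopenBasis
      ((indDimLEZero_iff_hasClopenBasis _).1 (h0 i))).hasClopenSeparation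
  have hcover : ⋃ i, (Subtype.val ⁻¹' (A i) : Set ↥(⋃ j, A j)) = univ := by
    rw [← preimage_iUnion, Subtype.coe_preimage_self]
  rw [indDimLEZero_iff_hasClopenBasis]
  exact (HasClopenSeparation.of_iUnion_eq_univ hcl hpiece hcover).hasClopenBasis
end
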